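/- Let Y be finite, π_ref fully supported, β > 0, and suppose π minimizes the DPO loss L_DPO over fully supported policies with the minimum attained. Then the reward r = f(π), where f(π)(y) = β·log(π(y)/π_ref(y)), minimizes the Bradley-Terry loss L_R over all reward functions, and π equals the KL-regularized optimal policy π_r for this reward; hence π ∈ Π_PPO. -/

import Mathlib

/-!
The DPO loss of a policy is the Bradley–Terry loss of its implicit reward `β log (π / π_ref)`.
Conversely every reward `r` is, up to the additive constant `β log Z_r`, the implicit reward of
its Gibbs policy `π_ref exp (r / β) / Z_r`, and the Bradley–Terry loss only sees reward
differences. So the loss of any reward is the DPO loss of a fully supported policy, which is at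
least the minimal DPO loss, i.e. the loss of `f(π)`. Finally the Gibbs policy of `f(π)` is `π`.
-/

open Finset

noncomputable section

namespace DPO

def pairwiseLoss {Y : Type*} (σ : ℝ → ℝ) (D : Multiset (Y × Y)) (r : Y → ℝ) : ℝ :=
  -(D.map fun p => Real.log (σ (r p.1 - r p.2))).sum

lemma pairwiseLoss_sub_const {Y : Type*} (σ : ℝ → ℝ) (D : Multiset (Y × Y)) (r : Y → ℝ)
    (c : ℝ) : pairwiseLoss σ D (fun y => r y - c) = pairwiseLoss σ D r := by
  simp only [pairwiseLoss, sub_sub_sub_cancel_right]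

variable {Y : Type*} {πref : Y → ℝ} {β : ℝ}

def implicitReward (πref : Y → ℝ) (β : ℝ) (π : Y → ℝ) (y : Y) : ℝ :=
  β * Real.log (π y / πref y)

lemma mul_exp_implicitReward (hβ : β ≠ 0) (href_pos : ∀ y, 0 < πref y) {π : Y → ℝ}
    (hπ_pos : ∀ y, 0 < π y) (y : Y) :
    πref y * Real.exp (implicitReward πref β π y / β) = π y := by
  rw [implicitReward, mul_div_cancel_left₀ _ hβ, Real.exp_log (div_pos (hπ_pos y) (href_pos y)),
    mul_div_cancel₀ _ (href_pos y).ne']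

variable [Fintype Y]

def partitionFn (πref : Y → ℝ) (β : ℝ) (r : Y → ℝ) : ℝ :=
  ∑ y, πref y * Real.exp (r y / β)

def gibbsPolicy (πref : Y → ℝ) (β : ℝ) (r : Y → ℝ) (y : Y) : ℝ :=
  πref y * Real.exp (r y / β) / partitionFn πref β r

lemma partitionFn_pos [Nonempty Y] (href_pos : ∀ y, 0 < πref y) (r : Y → ℝ) :
    0 < partitionFn πref β r :=
  sum_pos (fun y _ => mul_pos (href_pos y) (Real.exp_pos _)) univ_nonempty

lemma gibbsPolicy_pos [Nonempty Y] (href_pos : ∀ y, 0 < πref y) (r : Y → ℝ) (y : Y) :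
    0 < gibbsPolicy πref β r y :=
  div_pos (mul_pos (href_pos y) (Real.exp_pos _)) (partitionFn_pos href_pos r)

lemma sum_gibbsPolicy [Nonempty Y] (href_pos : ∀ y, 0 < πref y) (r : Y → ℝ) :
    ∑ y, gibbsPolicy πref β r y = 1 := by
  simp only [gibbsPolicy, ← sum_div]
  exact div_self (partitionFn_pos href_pos r).ne'

lemma implicitReward_gibbsPolicy [Nonempty Y] (hβ : β ≠ 0) (href_pos : ∀ y, 0 < πref y)
    (r : Y → ℝ) :
    implicitReward πref β (gibbsPolicy πref β r) =
      fun y => r y - β * Real.log (partitionFn πref β r) := by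
  funext y
  have hZ := (partitionFn_pos (β := β) href_pos r).ne'
  have hratio : gibbsPolicy πref β r y / πref y = Real.exp (r y / β) / partitionFn πref β r := by
    rw [gibbsPolicy, mul_div_assoc, mul_div_cancel_left₀ _ (href_pos y).ne']
  rw [implicitReward, hratio, Real.log_div (Real.exp_ne_zero _) hZ, Real.log_exp, mul_sub,
    mul_div_cancel₀ _ hβ]

lemma pairwiseLoss_implicitReward_gibbsPolicy [Nonempty Y] (hβ : β ≠ 0)
    (href_pos : ∀ y, 0 < πref y) (σ : ℝ → ℝ) (D : Multiset (Y × Y)) (r : Y → ℝ) :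
    pairwiseLoss σ D (implicitReward πref β (gibbsPolicy πref β r)) = pairwiseLoss σ D r := by
  rw [implicitReward_gibbsPolicy hβ href_pos, pairwiseLoss_sub_const]

lemma gibbsPolicy_implicitReward (hβ : β ≠ 0) (href_pos : ∀ y, 0 < πref y) {π : Y → ℝ}
    (hπ_pos : ∀ y, 0 < π y) (hπ_sum : ∑ y, π y = 1) :
    gibbsPolicy πref β (implicitReward πref β π) = π := by
  funext y
  simp only [gibbsPolicy, partitionFn, mul_exp_implicitReward hβ href_pos hπ_pos, hπ_sum,
    div_one]

end DPO

end

open DPO in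
theorem stmt_18_general {Y : Type*} [Fintype Y] [Nonempty Y]
    (πref : Y → ℝ) (href_pos : ∀ y, 0 < πref y)
    (β : ℝ) (hβ : 0 < β)
    (D : Multiset (Y × Y))
    (σ : ℝ → ℝ)
    (LR : (Y → ℝ) → ℝ)
    (hLR : ∀ r : Y → ℝ, LR r = -(D.map (fun p => Real.log (σ (r p.1 - r p.2)))).sum)
    (LDPO : (Y → ℝ) → ℝ)
    (hLDPO : ∀ π : Y → ℝ, LDPO π = -(D.map (fun p => Real.log (σ
        (β * Real.log (π p.1 / πref p.1) - β * Real.log (π p.2 / πref p.2))))).sum)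
    (π : Y → ℝ) (hπ_pos : ∀ y, 0 < π y) (hπ_sum : ∑ y, π y = 1)
    (hmin : ∀ π' : Y → ℝ, (∀ y, 0 < π' y) → (∑ y, π' y = 1) → LDPO π ≤ LDPO π')
    (f : Y → ℝ) (hf : ∀ y, f y = β * Real.log (π y / πref y)) :
    (∀ r : Y → ℝ, LR f ≤ LR r) ∧
    (∀ y, π y = πref y * Real.exp (f y / β) /
        (∑ y', πref y' * Real.exp (f y' / β))) := by
  obtain rfl : LR = pairwiseLoss σ D := funext hLR
  obtain rfl : LDPO = fun π => pairwiseLoss σ D (implicitReward πref β π) := funext hLDPO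
  obtain rfl : f = implicitReward πref β π := funext hf
  refine ⟨fun r => ?_, fun y => ?_⟩
  · calc pairwiseLoss σ D (implicitReward πref β π)
        ≤ pairwiseLoss σ D (implicitReward πref β (gibbsPolicy πref β r)) :=
          hmin _ (gibbsPolicy_pos href_pos r) (sum_gibbsPolicy href_pos r)
      _ = pairwiseLoss σ D r := pairwiseLoss_implicitReward_gibbsPolicy hβ.ne' href_pos σ D r
  · exact (congrFun (gibbsPolicy_implicitReward hβ.ne' href_pos hπ_pos hπ_sum) y).symm

/-- Converse inclusion: if a fully supported policy `π` attains the minimum of the DPO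
loss over fully supported policies, then `r = f(π)` (with `f(π)(y) = β·log(π(y)/π_ref(y))`)
minimizes the Bradley–Terry loss over all rewards, and `π` is the KL-regularized optimal
policy `π_r` for this reward; hence `π ∈ Π_PPO`. -/
theorem stmt_18 {Y : Type*} [Fintype Y] [Nonempty Y]
    (πref : Y → ℝ) (href_pos : ∀ y, 0 < πref y) (href_sum : ∑ y, πref y = 1)
    (β : ℝ) (hβ : 0 < β)
    (D : Multiset (Y × Y))
    (σ : ℝ → ℝ) (hσ : ∀ x, σ x = 1 / (1 + Real.exp (-x)))
    (LR : (Y → ℝ) → ℝ)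
    (hLR : ∀ r : Y → ℝ, LR r = -(D.map (fun p => Real.log (σ (r p.1 - r p.2)))).sum)
    (LDPO : (Y → ℝ) → ℝ)
    (hLDPO : ∀ π : Y → ℝ, LDPO π = -(D.map (fun p => Real.log (σ
        (β * Real.log (π p.1 / πref p.1) - β * Real.log (π p.2 / πref p.2))))).sum)
    (π : Y → ℝ) (hπ_pos : ∀ y, 0 < π y) (hπ_sum : ∑ y, π y = 1)
    (hmin : ∀ π' : Y → ℝ, (∀ y, 0 < π' y) → (∑ y, π' y = 1) → LDPO π ≤ LDPO π')
    (f : Y → ℝ) (hf : ∀ y, f y = β * Real.log (π y / πref y)) :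
    (∀ r : Y → ℝ, LR f ≤ LR r) ∧
    (∀ y, π y = πref y * Real.exp (f y / β) /
        (∑ y', πref y' * Real.exp (f y' / β))) :=
  stmt_18_general πref href_pos β hβ D σ LR hLR LDPO hLDPO π hπ_pos hπ_sum hmin f hf
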